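/- arXiv:1109.2808 — 2 statements merged into one kernel-verified Lean document; each statement's English description precedes it below -/
import Mathlib

section
/- Let N ≥ 2, 1 < q < 2, and 0 < ε < R. Set C₄(q) = (q−1)^{(q−2)/(q−1)} · (2−q)^{−1} and define U on the annulus A = {x ∈ ℝ^N : ε < ‖x‖ < R} by U(x) = C₄(q) · ( (‖x‖ − ε)^{(q−2)/(q−1)} − (R − ε)^{(q−2)/(q−1)} ). Then U is twice continuously differentiable on A and is a supersolution there: −ΔU(x) + ‖∇U(x)‖^q ≥ 0 for every x ∈ A. -/
/-!
The radial profile `g(t) = C₄(q) ((t - ε)^{(q-2)/(q-1)} - (R - ε)^{(q-2)/(q-1)})` has slope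
`g'(t) = -((q - 1)(t - ε))^{-1/(q-1)} ≤ 0` and solves the one-dimensional equation `g'' = |g'|^q`.
For a radial function `u = g(‖x‖)` one has `∇u(x) = g'(r) x / r` and
`Δu(x) = g''(r) + (N - 1) g'(r) / r` with `r = ‖x‖`, so `-Δu + ‖∇u‖^q = -(N - 1) g'(r) / r ≥ 0`.
-/

open Metric Set

/-- The Laplacian of `u : ℝ^N → ℝ`, as the sum of the second partial derivatives. -/
noncomputable def lap {N : ℕ} (u : EuclideanSpace ℝ (Fin N) → ℝ)
    (x : EuclideanSpace ℝ (Fin N)) : ℝ :=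
  ∑ i : Fin N, fderiv ℝ (fun y => fderiv ℝ u y (EuclideanSpace.single i 1)) x
    (EuclideanSpace.single i 1)

open Filter Topology
open scoped RealInnerProductSpace

section Radial

variable {E : Type*} [NormedAddCommGroup E] [InnerProductSpace ℝ E] {x : E}
  {g g' : ℝ → ℝ} {g'' : ℝ}

theorem hasFDerivAt_norm (hx : x ≠ 0) :
    HasFDerivAt (‖·‖) (‖x‖⁻¹ • innerSL ℝ x) x := by
  have h := (hasStrictFDerivAt_norm_sq x).hasFDerivAt.sqrt (by positivity)
  simp only [Real.sqrt_sq (norm_nonneg _)] at h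
  refine h.congr_fderiv ?_
  ext v
  simp only [FunLike.coe_smul, Pi.smul_apply, innerSL_apply_apply, smul_eq_mul]
  field_simp
  norm_num

theorem hasFDerivAt_comp_norm {d : ℝ} (hg : HasDerivAt g d ‖x‖) (hx : x ≠ 0) :
    HasFDerivAt (fun y => g ‖y‖) ((d / ‖x‖) • innerSL ℝ x) x := by
  refine (hg.comp_hasFDerivAt x (hasFDerivAt_norm hx)).congr_fderiv ?_
  rw [smul_smul, div_eq_mul_inv]

theorem hasGradientAt_comp_norm [CompleteSpace E] {d : ℝ} (hg : HasDerivAt g d ‖x‖)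
    (hx : x ≠ 0) : HasGradientAt (fun y => g ‖y‖) ((d / ‖x‖) • x) x := by
  rw [hasGradientAt_iff_hasFDerivAt]
  refine (hasFDerivAt_comp_norm hg hx).congr_fderiv ?_
  ext v
  simp

theorem fderiv_comp_norm_apply_eventuallyEq (hg : ∀ᶠ t in 𝓝 ‖x‖, HasDerivAt g (g' t) t)
    (hx : x ≠ 0) (v : E) :
    (fun y => fderiv ℝ (fun z => g ‖z‖) y v) =ᶠ[𝓝 x] fun y => g' ‖y‖ / ‖y‖ * ⟪v, y⟫ := by
  filter_upwards [(continuous_norm.tendsto x).eventually hg, eventually_ne_nhds hx]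
    with y hgy hy
  rw [(hasFDerivAt_comp_norm hgy hy).fderiv]
  simp [real_inner_comm]

theorem fderiv_fderiv_comp_norm_apply (hg : ∀ᶠ t in 𝓝 ‖x‖, HasDerivAt g (g' t) t)
    (hg' : HasDerivAt g' g'' ‖x‖) (hx : x ≠ 0) (v : E) :
    fderiv ℝ (fun y => fderiv ℝ (fun z => g ‖z‖) y v) x v =
      (g'' - g' ‖x‖ / ‖x‖) / ‖x‖ ^ 2 * ⟪x, v⟫ ^ 2 + g' ‖x‖ / ‖x‖ * ‖v‖ ^ 2 := by
  have hr : ‖x‖ ≠ 0 := norm_ne_zero_iff.2 hx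
  have hslope : HasDerivAt (fun t => g' t / t) ((g'' * ‖x‖ - g' ‖x‖) / ‖x‖ ^ 2) ‖x‖ := by
    simpa using hg'.fun_div (hasDerivAt_id' _) hr
  have hF : HasFDerivAt (fun y => g' ‖y‖ / ‖y‖ * ⟪v, y⟫) _ x :=
    (hasFDerivAt_comp_norm hslope hx).mul (innerSL ℝ v).hasFDerivAt
  rw [(fderiv_comp_norm_apply_eventuallyEq hg hx v).fderiv_eq, hF.fderiv]
  simp [real_inner_comm]
  field_simp
  ring

end Radial

section Laplacian

variable {N : ℕ} {x : EuclideanSpace ℝ (Fin N)} {g g' : ℝ → ℝ} {g'' : ℝ}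

theorem lap_comp_norm (hg : ∀ᶠ t in 𝓝 ‖x‖, HasDerivAt g (g' t) t)
    (hg' : HasDerivAt g' g'' ‖x‖) (hx : x ≠ 0) :
    lap (fun y => g ‖y‖) x = g'' + (N - 1) * (g' ‖x‖ / ‖x‖) := by
  have hr : ‖x‖ ≠ 0 := norm_ne_zero_iff.2 hx
  simp only [lap, fderiv_fderiv_comp_norm_apply hg hg' hx, EuclideanSpace.inner_single_right,
    PiLp.norm_single, norm_one, one_pow, mul_one, one_mul, conj_trivial,
    Finset.sum_add_distrib, ← Finset.mul_sum, Finset.sum_const, Finset.card_univ,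
    Fintype.card_fin, nsmul_eq_mul]
  rw [← EuclideanSpace.real_norm_sq_eq]
  field_simp
  ring

theorem radial_supersolution {q : ℝ} (hN : 1 ≤ N) (hx : x ≠ 0)
    (hg : ∀ᶠ t in 𝓝 ‖x‖, HasDerivAt g (g' t) t) (hg' : HasDerivAt g' (|g' ‖x‖| ^ q) ‖x‖)
    (hneg : g' ‖x‖ ≤ 0) :
    0 ≤ -lap (fun y => g ‖y‖) x + ‖gradient (fun y => g ‖y‖) x‖ ^ q := by
  have hr : 0 < ‖x‖ := norm_pos_iff.2 hx
  have hgrad : ‖gradient (fun y => g ‖y‖) x‖ = |g' ‖x‖| := by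
    rw [(hasGradientAt_comp_norm hg.self_of_nhds hx).gradient, norm_smul, Real.norm_eq_abs,
      abs_div, abs_of_pos hr, div_mul_cancel₀ _ hr.ne']
  have hN' : (0 : ℝ) ≤ N - 1 := by
    rw [sub_nonneg]
    exact_mod_cast hN
  rw [lap_comp_norm hg hg' hx, hgrad, neg_add, neg_add_cancel_comm, ← mul_neg, ← neg_div]
  exact mul_nonneg hN' (div_nonneg (neg_nonneg.2 hneg) hr.le)

end Laplacian

section Profile

variable {q ε t : ℝ}

noncomputable def blowupProfile (q ε R t : ℝ) : ℝ :=
  (q - 1) ^ ((q - 2) / (q - 1)) * (2 - q)⁻¹ *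
    ((t - ε) ^ ((q - 2) / (q - 1)) - (R - ε) ^ ((q - 2) / (q - 1)))

noncomputable def blowupSlope (q ε t : ℝ) : ℝ :=
  -((q - 1) * (t - ε)) ^ (-(q - 1)⁻¹)

theorem contDiffAt_blowupProfile {n : WithTop ℕ∞} (R : ℝ) (ht : ε < t) :
    ContDiffAt ℝ n (blowupProfile q ε R) t :=
  contDiffAt_const.mul <|
    ((contDiffAt_id.sub contDiffAt_const).rpow_const_of_ne (sub_ne_zero.2 ht.ne')).sub
      contDiffAt_const

theorem hasDerivAt_blowupProfile (R : ℝ) (hq1 : 1 < q) (hq2 : q ≠ 2) (ht : ε < t) :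
    HasDerivAt (blowupProfile q ε R) (blowupSlope q ε t) t := by
  have hB : 0 < q - 1 := sub_pos.2 hq1
  have hs : 0 < t - ε := sub_pos.2 ht
  have h2q : 2 - q ≠ 0 := sub_ne_zero.2 hq2.symm
  have hexp : (q - 2) / (q - 1) - 1 = -(q - 1)⁻¹ := by
    field_simp
    ring
  have h := ((((hasDerivAt_id' t).sub_const ε).rpow_const (p := (q - 2) / (q - 1))
    (Or.inl hs.ne')).sub_const ((R - ε) ^ ((q - 2) / (q - 1)))).const_mul
      ((q - 1) ^ ((q - 2) / (q - 1)) * (2 - q)⁻¹)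
  refine h.congr_deriv ?_
  rw [blowupSlope, Real.mul_rpow hB.le hs.le, ← hexp, Real.rpow_sub_one hB.ne']
  field_simp
  ring

theorem blowupSlope_nonpos (hq1 : 1 < q) (ht : ε < t) : blowupSlope q ε t ≤ 0 :=
  neg_nonpos.2 <| Real.rpow_nonneg (mul_nonneg (sub_pos.2 hq1).le (sub_pos.2 ht).le) _

theorem hasDerivAt_blowupSlope (hq1 : 1 < q) (ht : ε < t) :
    HasDerivAt (blowupSlope q ε) (|blowupSlope q ε t| ^ q) t := by
  have hB : 0 < q - 1 := sub_pos.2 hq1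
  have hBs : 0 < (q - 1) * (t - ε) := mul_pos hB (sub_pos.2 ht)
  have h := ((((hasDerivAt_id' t).sub_const ε).const_mul (q - 1)).rpow_const
    (p := -(q - 1)⁻¹) (Or.inl hBs.ne')).neg
  refine h.congr_deriv ?_
  have hexp : -(q - 1)⁻¹ * q = -(q - 1)⁻¹ - 1 := by
    field_simp
    ring
  rw [blowupSlope, abs_neg, abs_of_nonneg (Real.rpow_nonneg hBs.le _), ← Real.rpow_mul hBs.le,
    hexp]
  field_simp

end Profile

theorem radial_supersolution_annulus_general
    (N : ℕ) (hN : 2 ≤ N) (q : ℝ) (hq1 : 1 < q) (hq2 : q < 2)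
    (ε R : ℝ) (hε : 0 < ε) :
    ContDiffOn ℝ 2
      (fun x : EuclideanSpace ℝ (Fin N) =>
        (q - 1) ^ ((q - 2) / (q - 1)) * (2 - q)⁻¹ *
          ((‖x‖ - ε) ^ ((q - 2) / (q - 1)) - (R - ε) ^ ((q - 2) / (q - 1))))
      {x : EuclideanSpace ℝ (Fin N) | ε < ‖x‖ ∧ ‖x‖ < R} ∧
    ∀ x : EuclideanSpace ℝ (Fin N), ε < ‖x‖ → ‖x‖ < R →
      0 ≤ -lap (fun x : EuclideanSpace ℝ (Fin N) =>
            (q - 1) ^ ((q - 2) / (q - 1)) * (2 - q)⁻¹ *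
              ((‖x‖ - ε) ^ ((q - 2) / (q - 1)) - (R - ε) ^ ((q - 2) / (q - 1)))) x
          + ‖gradient (fun x : EuclideanSpace ℝ (Fin N) =>
              (q - 1) ^ ((q - 2) / (q - 1)) * (2 - q)⁻¹ *
                ((‖x‖ - ε) ^ ((q - 2) / (q - 1)) - (R - ε) ^ ((q - 2) / (q - 1)))) x‖ ^ q := by
  have hx0 : ∀ x : EuclideanSpace ℝ (Fin N), ε < ‖x‖ → x ≠ 0 :=
    fun x hx => norm_pos_iff.1 (hε.trans hx)
  refine ⟨fun x hx => ?_, fun x hx _ => ?_⟩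
  · exact ((contDiffAt_blowupProfile R hx.1).comp x
      (contDiffAt_norm ℝ (hx0 x hx.1))).contDiffWithinAt
  · have hslope : ∀ᶠ t in 𝓝 ‖x‖, HasDerivAt (blowupProfile q ε R) (blowupSlope q ε t) t :=
      (lt_mem_nhds hx).mono fun t ht => hasDerivAt_blowupProfile R hq1 hq2.ne ht
    exact radial_supersolution (g := blowupProfile q ε R) (by omega) (hx0 x hx) hslope
      (hasDerivAt_blowupSlope hq1 hx) (blowupSlope_nonpos hq1 hx)

/-- The radial comparison function
`U(x) = C₄(q) ((‖x‖−ε)^{(q−2)/(q−1)} − (R−ε)^{(q−2)/(q−1)})` is a `C²` supersolution of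
`−Δu + |∇u|^q = 0` on the annulus `{ε < ‖x‖ < R}`. -/
theorem radial_supersolution_annulus
    (N : ℕ) (hN : 2 ≤ N) (q : ℝ) (hq1 : 1 < q) (hq2 : q < 2)
    (ε R : ℝ) (hε : 0 < ε) (hεR : ε < R) :
    ContDiffOn ℝ 2
      (fun x : EuclideanSpace ℝ (Fin N) =>
        (q - 1) ^ ((q - 2) / (q - 1)) * (2 - q)⁻¹ *
          ((‖x‖ - ε) ^ ((q - 2) / (q - 1)) - (R - ε) ^ ((q - 2) / (q - 1))))
      {x : EuclideanSpace ℝ (Fin N) | ε < ‖x‖ ∧ ‖x‖ < R} ∧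
    ∀ x : EuclideanSpace ℝ (Fin N), ε < ‖x‖ → ‖x‖ < R →
      0 ≤ -lap (fun x : EuclideanSpace ℝ (Fin N) =>
            (q - 1) ^ ((q - 2) / (q - 1)) * (2 - q)⁻¹ *
              ((‖x‖ - ε) ^ ((q - 2) / (q - 1)) - (R - ε) ^ ((q - 2) / (q - 1)))) x
          + ‖gradient (fun x : EuclideanSpace ℝ (Fin N) =>
              (q - 1) ^ ((q - 2) / (q - 1)) * (2 - q)⁻¹ *
                ((‖x‖ - ε) ^ ((q - 2) / (q - 1)) - (R - ε) ^ ((q - 2) / (q - 1)))) x‖ ^ q :=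
  radial_supersolution_annulus_general N hN q hq1 hq2 ε R hε
end

section
/- Let N ≥ 2 and 1 < q < 2. Let z₀ ∈ ℝ^N and R > 0 satisfy ‖z₀‖ = R, and set Ω = B_R(z₀), so that 0 ∈ ∂Ω. There exist r₀ ∈ (0, R), δ > 0 and c > 0, depending only on N, q and R, with the following property: for every Q ∈ (∂Ω \ {0}) ∩ B_{2r₀/3}, every 0 < r ≤ ‖Q‖/4, every u that is positive and twice continuously differentiable on Ω with Δu(x) = ‖∇u(x)‖^q on Ω, continuous on Ω ∪ ((∂Ω \ {0}) ∩ B_{2r₀}) and vanishing on (∂Ω \ {0}) ∩ B_{2r₀}, every P ∈ ∂Ω ∩ B_r(Q), every 0 < s < r, and every x ∈ B_s(P) ∩ Ω: u(x) ≤ c · (‖x − P‖/s)^δ · sup{ u(z) : z ∈ B_s(P) ∩ Ω } (Hölder decay at the boundary). -/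
/-!
A subharmonic function vanishing on the boundary of a ball decays linearly there, so one may
take `δ = 1`. Let `P ∈ ∂Ω`, let `ν` be the outer unit normal at `P`, so that `Ω` lies in the
half-space `a(y) := ⟪P - y, ν⟫ ≥ 0`, and let `M` be the supremum of `u` on `B_s(P) ∩ Ω`. The
quadratic `w = M / s² · (‖y - P‖² + (N + 1) s a - N a²)` is harmonic (`Δ‖y - P‖² = 2N = Δ(N a²)`),
and since `0 ≤ a ≤ ‖y - P‖` it is nonnegative on the closure of `B_s(P) ∩ Ω` and at least `M` on
`∂B_s(P)`. The weak maximum principle for the subharmonic `u - w` gives `u ≤ w`, and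
`w(x) ≤ (N + 2) M ‖x - P‖ / s`.
-/

open Metric Set

open Filter Topology
open scoped RealInnerProductSpace

theorem sum_inner_single_sq {N : ℕ} (ν : EuclideanSpace ℝ (Fin N)) :
    ∑ i : Fin N, ⟪EuclideanSpace.single i (1 : ℝ), ν⟫ ^ 2 = ‖ν‖ ^ 2 := by
  have := (EuclideanSpace.basisFun (Fin N) ℝ).sum_inner_mul_inner ν ν
  simp only [EuclideanSpace.basisFun_apply, real_inner_self_eq_norm_sq] at this
  rw [← this]
  exact Finset.sum_congr rfl fun i _ => by rw [sq, real_inner_comm]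

section
variable {E : Type*} [NormedAddCommGroup E] [InnerProductSpace ℝ E]

noncomputable def innerNormQuadratic (a ν : E) (α β γ : ℝ) (y : E) : ℝ :=
  α * ⟪a - y, ν⟫ + β * ⟪a - y, ν⟫ ^ 2 + γ * ‖y - a‖ ^ 2

theorem innerNormQuadratic_add_smul (a ν x e : E) (α β γ τ : ℝ) :
    innerNormQuadratic a ν α β γ (x + τ • e) = innerNormQuadratic a ν α β γ x
        + (-α * ⟪e, ν⟫ - 2 * β * ⟪a - x, ν⟫ * ⟪e, ν⟫ + 2 * γ * ⟪x - a, e⟫) * τ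
        + (β * ⟪e, ν⟫ ^ 2 + γ * ‖e‖ ^ 2) * τ ^ 2 := by
  rw [innerNormQuadratic, innerNormQuadratic, show x + τ • e - a = (x - a) + τ • e by abel,
    norm_add_sq_real, norm_smul, inner_smul_right, show a - (x + τ • e) = (a - x) - τ • e by abel,
    inner_sub_left, inner_smul_left]
  simp only [conj_trivial, Real.norm_eq_abs, mul_pow, sq_abs]
  ring

theorem contDiff_innerNormQuadratic (a ν : E) (α β γ : ℝ) {n : WithTop ℕ∞} :
    ContDiff ℝ n (innerNormQuadratic a ν α β γ) := by
  have hin : ContDiff ℝ n fun y : E => ⟪a - y, ν⟫ :=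
    (contDiff_const.sub contDiff_id).inner ℝ contDiff_const
  have hno : ContDiff ℝ n fun y : E => ‖y - a‖ ^ 2 :=
    (contDiff_norm_sq ℝ).comp (contDiff_id.sub contDiff_const)
  exact ((contDiff_const.mul hin).add (contDiff_const.mul (hin.pow 2))).add (contDiff_const.mul hno)

end

theorem deriv_deriv_quadratic (A B C t : ℝ) :
    deriv (deriv fun τ : ℝ => A + B * τ + C * τ ^ 2) t = 2 * C := by
  have hderiv : deriv (fun τ : ℝ => A + B * τ + C * τ ^ 2) = fun τ => B + 2 * C * τ := by
    funext τ
    have := (((hasDerivAt_id' τ).const_mul B).const_add A).add ((hasDerivAt_pow 2 τ).const_mul C)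
    exact (this.congr_deriv (by norm_num; ring)).deriv
  rw [hderiv]
  simp

theorem IsLocalMax.deriv_deriv_nonpos {g : ℝ → ℝ} {t : ℝ} (h : IsLocalMax g t)
    (hc : ContinuousAt g t) : deriv (deriv g) t ≤ 0 := by
  by_contra! hpos
  have hconst : g =ᶠ[𝓝 t] fun _ => g t := by
    filter_upwards [h, isLocalMin_of_deriv_deriv_pos hpos h.deriv_eq_zero hc] with τ h₁ h₂
    exact le_antisymm h₁ h₂
  have : deriv g =ᶠ[𝓝 t] fun _ => 0 := by
    filter_upwards [hconst.eventuallyEq_nhds] with τ hτ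
    rw [hτ.deriv_eq, deriv_const]
  rw [this.deriv_eq, deriv_const] at hpos
  exact hpos.false

section
variable {E : Type*} [NormedAddCommGroup E] [NormedSpace ℝ E] {v : E → ℝ} {x : E}

theorem ContDiffAt.differentiableAt_fderiv_apply (hv : ContDiffAt ℝ 2 v x) (e : E) :
    DifferentiableAt ℝ (fun y => fderiv ℝ v y e) x :=
  ((hv.fderiv_right (m := 1) (by norm_num)).differentiableAt one_ne_zero).clm_apply
    (differentiableAt_const e)

theorem ContDiffAt.eventually_differentiableAt (hv : ContDiffAt ℝ 2 v x) :
    ∀ᶠ y in 𝓝 x, DifferentiableAt ℝ v y :=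
  (hv.eventually (by simp)).mono fun _ hy => hy.differentiableAt two_ne_zero

theorem ContDiffAt.deriv_deriv_comp_line (hv : ContDiffAt ℝ 2 v x) (e : E) :
    deriv (deriv fun τ : ℝ => v (x + τ • e)) 0 = fderiv ℝ (fun y => fderiv ℝ v y e) x e := by
  have hline : ∀ τ : ℝ, HasDerivAt (fun τ : ℝ => x + τ • e) e τ := fun τ => by
    simpa using ((hasDerivAt_id τ).smul_const e).const_add x
  have hcont : Tendsto (fun τ : ℝ => x + τ • e) (𝓝 0) (𝓝 x) := by
    simpa using (hline 0).continuousAt.tendsto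
  have hderiv : deriv (fun τ : ℝ => v (x + τ • e)) =ᶠ[𝓝 0]
      fun τ => fderiv ℝ v (x + τ • e) e := by
    filter_upwards [hcont.eventually hv.eventually_differentiableAt] with τ hτ
    exact (hτ.hasFDerivAt.comp_hasDerivAt τ (hline τ)).deriv
  rw [hderiv.deriv_eq]
  exact ((hv.differentiableAt_fderiv_apply e).hasFDerivAt.comp_hasDerivAt_of_eq 0 (hline 0)
    (by simp)).deriv

end

variable {N : ℕ} {u v : EuclideanSpace ℝ (Fin N) → ℝ} {x : EuclideanSpace ℝ (Fin N)}

theorem lap_eq_sum_deriv_deriv (hv : ContDiffAt ℝ 2 v x) :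
    lap v x = ∑ i, deriv (deriv fun τ : ℝ => v (x + τ • EuclideanSpace.single i 1)) 0 :=
  Finset.sum_congr rfl fun _ _ => (hv.deriv_deriv_comp_line _).symm

theorem IsLocalMax.lap_nonpos (h : IsLocalMax v x) (hv : ContDiffAt ℝ 2 v x) : lap v x ≤ 0 := by
  rw [lap_eq_sum_deriv_deriv hv]
  refine Finset.sum_nonpos fun i _ => ?_
  have hline : ContinuousAt (fun τ : ℝ => x + τ • EuclideanSpace.single i (1 : ℝ)) 0 := by
    fun_prop
  exact IsLocalMax.deriv_deriv_nonpos (IsLocalMax.comp_continuous (by simpa using h) hline)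
    (hv.continuousAt.comp_of_eq hline (by simp))

theorem lap_add (hu : ContDiffAt ℝ 2 u x) (hv : ContDiffAt ℝ 2 v x) :
    lap (fun y => u y + v y) x = lap u x + lap v x := by
  rw [lap, lap, lap, ← Finset.sum_add_distrib]
  refine Finset.sum_congr rfl fun i _ => ?_
  set e : EuclideanSpace ℝ (Fin N) := EuclideanSpace.single i 1
  have : (fun y => fderiv ℝ (fun y => u y + v y) y e) =ᶠ[𝓝 x]
      fun y => fderiv ℝ u y e + fderiv ℝ v y e := by
    filter_upwards [hu.eventually_differentiableAt, hv.eventually_differentiableAt] with y hu hv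
    rw [fderiv_fun_add hu hv, add_apply]
  rw [this.fderiv_eq, fderiv_fun_add (hu.differentiableAt_fderiv_apply e)
    (hv.differentiableAt_fderiv_apply e), add_apply]

theorem lap_sub (hu : ContDiffAt ℝ 2 u x) (hv : ContDiffAt ℝ 2 v x) :
    lap (fun y => u y - v y) x = lap u x - lap v x := by
  rw [lap, lap, lap, ← Finset.sum_sub_distrib]
  refine Finset.sum_congr rfl fun i _ => ?_
  set e : EuclideanSpace ℝ (Fin N) := EuclideanSpace.single i 1
  have : (fun y => fderiv ℝ (fun y => u y - v y) y e) =ᶠ[𝓝 x]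
      fun y => fderiv ℝ u y e - fderiv ℝ v y e := by
    filter_upwards [hu.eventually_differentiableAt, hv.eventually_differentiableAt] with y hu hv
    rw [fderiv_fun_sub hu hv, sub_apply]
  rw [this.fderiv_eq, fderiv_fun_sub (hu.differentiableAt_fderiv_apply e)
    (hv.differentiableAt_fderiv_apply e), sub_apply]

theorem lap_innerNormQuadratic (a ν : EuclideanSpace ℝ (Fin N)) (α β γ : ℝ) :
    lap (innerNormQuadratic a ν α β γ) x = 2 * β * ‖ν‖ ^ 2 + 2 * γ * N := by
  rw [lap_eq_sum_deriv_deriv (contDiff_innerNormQuadratic a ν α β γ).contDiffAt]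
  simp_rw [innerNormQuadratic_add_smul, deriv_deriv_quadratic]
  simp only [PiLp.norm_single, norm_one, one_pow, mul_one, mul_add, Finset.sum_add_distrib,
    ← Finset.mul_sum, Finset.sum_const, Finset.card_univ, Fintype.card_fin, nsmul_eq_mul,
    sum_inner_single_sq]
  ring

theorem lap_const_mul_norm_sub_sq (a : EuclideanSpace ℝ (Fin N)) (γ : ℝ) :
    lap (fun y => γ * ‖y - a‖ ^ 2) x = 2 * γ * N := by
  have : innerNormQuadratic a 0 0 0 γ = fun y => γ * ‖y - a‖ ^ 2 := by
    funext y; simp [innerNormQuadratic]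
  simpa [this] using lap_innerNormQuadratic (x := x) a 0 0 0 γ

theorem le_zero_of_lap_nonneg (hN : 0 < N) {D : Set (EuclideanSpace ℝ (Fin N))} (hD : IsOpen D)
    (hDb : Bornology.IsBounded D) (hv : ContDiffOn ℝ 2 v D) (hvc : ContinuousOn v (closure D))
    (hlap : ∀ y ∈ D, 0 ≤ lap v y) (hfr : ∀ y ∈ frontier D, v y ≤ 0) : ∀ y ∈ D, v y ≤ 0 := by
  intro y hy
  obtain ⟨ρ, hρ⟩ := hDb.closure.subset_closedBall y
  -- Adding `η ‖· - y‖²` makes the Laplacian strictly positive, which rules out an interior maximum.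
  have key : ∀ η : ℝ, 0 < η → v y ≤ η * ρ ^ 2 := by
    intro η hη
    set F := fun z => v z + η * ‖z - y‖ ^ 2
    have hφ : ContDiff ℝ 2 fun z : EuclideanSpace ℝ (Fin N) => η * ‖z - y‖ ^ 2 :=
      contDiff_const.mul ((contDiff_norm_sq ℝ).comp (contDiff_id.sub contDiff_const))
    obtain ⟨z, hz, hmax⟩ := hDb.isCompact_closure.exists_isMaxOn ⟨y, subset_closure hy⟩
      (hvc.add hφ.continuous.continuousOn)
    have hzD : z ∉ D := by
      intro hzD
      have hFz : ContDiffAt ℝ 2 F z := (hv.contDiffAt (hD.mem_nhds hzD)).add hφ.contDiffAt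
      have hloc : IsLocalMax F z :=
        hmax.isLocalMax (Filter.mem_of_superset (hD.mem_nhds hzD) subset_closure)
      have := hloc.lap_nonpos hFz
      rw [lap_add (hv.contDiffAt (hD.mem_nhds hzD)) hφ.contDiffAt,
        lap_const_mul_norm_sub_sq] at this
      have : (0 : ℝ) < 2 * η * N := by positivity
      linarith [hlap z hzD]
    have hvz : v z ≤ 0 := hfr z (hD.frontier_eq ▸ ⟨hz, hzD⟩)
    have hzy : ‖z - y‖ ≤ ρ := by simpa [dist_eq_norm] using hρ hz
    calc v y = F y := by simp [F]
      _ ≤ F z := hmax (subset_closure hy)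
      _ ≤ η * ρ ^ 2 := by
        have := pow_le_pow_left₀ (norm_nonneg _) hzy 2
        simp only [F]; nlinarith
  have hlim : Tendsto (fun η : ℝ => η * ρ ^ 2) (𝓝[>] 0) (𝓝 0) := by
    simpa using ((tendsto_id (x := 𝓝 (0 : ℝ))).mul_const (ρ ^ 2)).mono_left nhdsWithin_le_nhds
  exact ge_of_tendsto hlim (eventually_nhdsWithin_of_forall key)

noncomputable def boundaryBarrier (P ν : EuclideanSpace ℝ (Fin N)) (s M : ℝ) :
    EuclideanSpace ℝ (Fin N) → ℝ := fun y =>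
  M / s ^ 2 * (‖y - P‖ ^ 2 + (N + 1) * s * ⟪P - y, ν⟫ - N * ⟪P - y, ν⟫ ^ 2)

section boundaryBarrier

variable (P ν : EuclideanSpace ℝ (Fin N)) (s M : ℝ)

theorem boundaryBarrier_eq_innerNormQuadratic : boundaryBarrier P ν s M =
    innerNormQuadratic P ν (M / s ^ 2 * (N + 1) * s) (-(M / s ^ 2 * N)) (M / s ^ 2) := by
  funext y; simp only [boundaryBarrier, innerNormQuadratic]; ring

theorem contDiff_boundaryBarrier {n : WithTop ℕ∞} : ContDiff ℝ n (boundaryBarrier P ν s M) :=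
  boundaryBarrier_eq_innerNormQuadratic P ν s M ▸ contDiff_innerNormQuadratic _ _ _ _ _

theorem lap_boundaryBarrier (hν : ‖ν‖ = 1) : lap (boundaryBarrier P ν s M) x = 0 := by
  rw [boundaryBarrier_eq_innerNormQuadratic, lap_innerNormQuadratic, hν]; ring

variable {P ν s M} {y : EuclideanSpace ℝ (Fin N)}

theorem inner_sub_le_norm_sub (hν : ‖ν‖ = 1) : ⟪P - y, ν⟫ ≤ ‖y - P‖ := by
  simpa [hν, norm_sub_rev] using real_inner_le_norm (P - y) ν

theorem sq_add_mul_le_boundaryBarrier (hν : ‖ν‖ = 1) (hs : 0 < s) (hM : 0 ≤ M)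
    (ha : 0 ≤ ⟪P - y, ν⟫) (hy : ‖y - P‖ ≤ s) :
    M / s ^ 2 * (‖y - P‖ ^ 2 + s * ⟪P - y, ν⟫) ≤ boundaryBarrier P ν s M y := by
  apply mul_le_mul_of_nonneg_left _ (by positivity)
  have : 0 ≤ (N : ℝ) * ⟪P - y, ν⟫ * (s - ⟪P - y, ν⟫) := by
    have := sub_nonneg.mpr ((inner_sub_le_norm_sub hν).trans hy); positivity
  nlinarith

theorem boundaryBarrier_nonneg (hν : ‖ν‖ = 1) (hs : 0 < s) (hM : 0 ≤ M)
    (ha : 0 ≤ ⟪P - y, ν⟫) (hy : ‖y - P‖ ≤ s) : 0 ≤ boundaryBarrier P ν s M y :=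
  le_trans (by positivity) (sq_add_mul_le_boundaryBarrier hν hs hM ha hy)

theorem le_boundaryBarrier_of_norm_eq (hν : ‖ν‖ = 1) (hs : 0 < s) (hM : 0 ≤ M)
    (ha : 0 ≤ ⟪P - y, ν⟫) (hy : ‖y - P‖ = s) : M ≤ boundaryBarrier P ν s M y := by
  refine le_trans ?_ (sq_add_mul_le_boundaryBarrier hν hs hM ha hy.le)
  rw [hy, mul_add, div_mul_cancel₀ _ (by positivity)]
  have : 0 ≤ M / s ^ 2 * (s * ⟪P - y, ν⟫) := by positivity
  linarith

theorem boundaryBarrier_le (hν : ‖ν‖ = 1) (hs : 0 < s) (hM : 0 ≤ M) (hy : ‖y - P‖ ≤ s) :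
    boundaryBarrier P ν s M y ≤ (N + 2) * (‖y - P‖ / s) * M := by
  have hbound : ‖y - P‖ ^ 2 + (N + 1) * s * ⟪P - y, ν⟫ - N * ⟪P - y, ν⟫ ^ 2 ≤
      (N + 2) * s * ‖y - P‖ := by
    have := mul_le_mul_of_nonneg_left (inner_sub_le_norm_sub hν (y := y) (P := P))
      (by positivity : (0 : ℝ) ≤ (N + 1) * s)
    nlinarith [mul_le_mul_of_nonneg_left hy (norm_nonneg (y - P)), sq_nonneg ⟪P - y, ν⟫,
      (Nat.cast_nonneg N : (0 : ℝ) ≤ N)]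
  calc boundaryBarrier P ν s M y ≤ M / s ^ 2 * ((N + 2) * s * ‖y - P‖) :=
        mul_le_mul_of_nonneg_left hbound (by positivity)
    _ = (N + 2) * (‖y - P‖ / s) * M := by field_simp

end boundaryBarrier

theorem le_boundaryBarrier_of_lap_nonneg (hN : 0 < N) {Ω : Set (EuclideanSpace ℝ (Fin N))}
    (hΩ : IsOpen Ω) {P ν : EuclideanSpace ℝ (Fin N)} (hν : ‖ν‖ = 1)
    (hΩν : Ω ⊆ {y | 0 ≤ ⟪P - y, ν⟫}) {s M : ℝ} (hs : 0 < s) (hM₀ : 0 ≤ M)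
    (hu : ContDiffOn ℝ 2 u (ball P s ∩ Ω)) (hlap : ∀ y ∈ ball P s ∩ Ω, 0 ≤ lap u y)
    (hcont : ContinuousOn u (closure (ball P s ∩ Ω)))
    (hM : ∀ y ∈ ball P s ∩ Ω, u y ≤ M) (hzero : ∀ y ∈ closure (ball P s ∩ Ω) \ Ω, u y ≤ 0) :
    ∀ y ∈ ball P s ∩ Ω, u y ≤ boundaryBarrier P ν s M y := by
  set D := ball P s ∩ Ω
  have hD : IsOpen D := isOpen_ball.inter hΩ
  have hinner : ∀ y ∈ closure D, 0 ≤ ⟪P - y, ν⟫ ∧ ‖y - P‖ ≤ s := by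
    intro y hy
    refine ⟨closure_minimal (hΩν.trans' inter_subset_right)
      (isClosed_le continuous_const (by fun_prop)) hy, ?_⟩
    rw [← dist_eq_norm]
    exact closure_ball_subset_closedBall (closure_mono inter_subset_left hy)
  have hMcl : ∀ y ∈ closure D, u y ≤ M := fun y hy =>
    closure_minimal (image_subset_iff.mpr hM : u '' D ⊆ Iic M) isClosed_Iic
      (hcont.image_closure ⟨y, hy, rfl⟩)
  have hw : ContDiff ℝ 2 (boundaryBarrier P ν s M) := contDiff_boundaryBarrier P ν s M
  have hle := le_zero_of_lap_nonneg (v := fun y => u y - boundaryBarrier P ν s M y) hN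
    hD (isBounded_ball.subset inter_subset_left)
    (hu.sub hw.contDiffOn) (hcont.sub hw.continuous.continuousOn) ?_ ?_
  · exact fun y hy => sub_nonpos.mp (hle y hy)
  · intro y hy
    rw [lap_sub (hu.contDiffAt (hD.mem_nhds hy)) hw.contDiffAt,
      lap_boundaryBarrier P ν s M hν, sub_zero]
    exact hlap y hy
  · intro y hy
    rw [hD.frontier_eq] at hy
    obtain ⟨ha, hyP⟩ := hinner y hy.1
    rw [sub_nonpos]
    by_cases hyΩ : y ∈ Ω
    · have hyP : ‖y - P‖ = s :=
        le_antisymm hyP (not_lt.mp fun h => hy.2 ⟨by rwa [mem_ball, dist_eq_norm], hyΩ⟩)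
      exact (hMcl y hy.1).trans (le_boundaryBarrier_of_norm_eq hν hs hM₀ ha hyP)
    · exact (hzero y ⟨hy.1, hyΩ⟩).trans (boundaryBarrier_nonneg hν hs hM₀ ha hyP)

theorem exists_norm_eq_one_closedBall_subset_inner_nonneg {E : Type*} [NormedAddCommGroup E]
    [InnerProductSpace ℝ E] {z₀ P : E} {R : ℝ} (hR : 0 < R) (hP : P ∈ sphere z₀ R) :
    ∃ ν : E, ‖ν‖ = 1 ∧ closedBall z₀ R ⊆ {y | 0 ≤ ⟪P - y, ν⟫} := by
  have hPz : ‖P - z₀‖ = R := by rwa [← dist_eq_norm, ← mem_sphere]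
  refine ⟨R⁻¹ • (P - z₀), by rw [norm_smul, hPz, norm_inv, Real.norm_of_nonneg hR.le,
    inv_mul_cancel₀ hR.ne'], fun y hy => ?_⟩
  have hy : ‖y - z₀‖ ≤ R := by rwa [← dist_eq_norm, ← mem_closedBall]
  have hCS := real_inner_le_norm (y - z₀) (P - z₀)
  have : ⟪P - y, P - z₀⟫ = R ^ 2 - ⟪y - z₀, P - z₀⟫ := by
    rw [show P - y = (P - z₀) - (y - z₀) by abel, inner_sub_left, real_inner_self_eq_norm_sq, hPz]
  rw [hPz] at hCS
  rw [mem_ofPred_eq, real_inner_smul_right, this]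
  exact mul_nonneg (inv_nonneg.mpr hR.le) (by nlinarith)

theorem closedBall_subset_compl_zero_inter_ball {E : Type*} [NormedAddCommGroup E]
    {P Q : E} {r s : ℝ} (hPQ : dist P Q < r) (hs : s < r) (hr : r ≤ ‖Q‖ / 4) :
    closedBall P s ⊆ {0}ᶜ ∩ ball 0 (3 * ‖Q‖ / 2) := by
  intro z hz
  have hzQ : dist z Q < ‖Q‖ / 2 := by
    linarith [dist_triangle z P Q, mem_closedBall.mp hz]
  refine ⟨fun h0 => ?_, mem_ball_zero_iff.mpr ?_⟩
  · rw [mem_singleton_iff.mp h0, dist_zero_left] at hzQ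
    linarith [norm_nonneg Q]
  · linarith [norm_le_norm_add_norm_sub' z Q, dist_eq_norm z Q]

theorem holder_boundary_decay_general
    (N : ℕ) (hN : 2 ≤ N) (q : ℝ)
    (z₀ : EuclideanSpace ℝ (Fin N)) (R : ℝ) (hR : 0 < R) :
    ∃ r₀ ∈ Set.Ioo (0 : ℝ) R, ∃ δ : ℝ, 0 < δ ∧ ∃ c : ℝ, 0 < c ∧
      ∀ Q ∈ (Metric.sphere z₀ R \ {0}) ∩ Metric.ball 0 (2 * r₀ / 3),
      ∀ r : ℝ, 0 < r → r ≤ ‖Q‖ / 4 →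
      ∀ u : EuclideanSpace ℝ (Fin N) → ℝ,
        (∀ x ∈ Metric.ball z₀ R, 0 < u x) →
        ContDiffOn ℝ 2 u (Metric.ball z₀ R) →
        (∀ x ∈ Metric.ball z₀ R, lap u x = ‖gradient u x‖ ^ q) →
        ContinuousOn u
          (Metric.ball z₀ R ∪ ((Metric.sphere z₀ R \ {0}) ∩ Metric.ball 0 (2 * r₀))) →
        (∀ x ∈ (Metric.sphere z₀ R \ {0}) ∩ Metric.ball 0 (2 * r₀), u x = 0) →
        ∀ P ∈ Metric.sphere z₀ R ∩ Metric.ball Q r,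
        ∀ s : ℝ, 0 < s → s < r →
        ∀ x ∈ Metric.ball P s ∩ Metric.ball z₀ R,
          u x ≤ c * (dist x P / s) ^ δ *
            sSup (u '' (Metric.ball P s ∩ Metric.ball z₀ R)) := by
  refine ⟨R / 2, ⟨by linarith, by linarith⟩, 1, one_pos, N + 2, by positivity, ?_⟩
  intro Q hQ r _ hrQ u hpos hu hlap hcont hvan P hP s hs hsr x hx
  obtain ⟨ν, hν, hΩν⟩ := exists_norm_eq_one_closedBall_subset_inner_nonneg hR hP.1
  set D := ball P s ∩ ball z₀ R
  have hnear : closedBall P s ⊆ {0}ᶜ ∩ ball 0 (2 * (R / 2)) :=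
    (closedBall_subset_compl_zero_inter_ball (mem_ball.mp hP.2) hsr hrQ).trans
      (inter_subset_inter_right _ (ball_subset_ball (by linarith [mem_ball_zero_iff.mp hQ.2])))
  have hbdry : closure D \ ball z₀ R ⊆ (sphere z₀ R \ {0}) ∩ ball 0 (2 * (R / 2)) := by
    rintro y ⟨hyD, hyΩ⟩
    obtain ⟨hyP, hyz⟩ := closure_inter_subset_inter_closure _ _ hyD
    obtain ⟨hy0, hy2⟩ := hnear (closure_ball_subset_closedBall hyP)
    exact ⟨⟨le_antisymm (closure_ball_subset_closedBall hyz) (not_lt.mp hyΩ), hy0⟩, hy2⟩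
  have hcontD : ContinuousOn u (closure D) := hcont.mono fun y hy => by
    by_cases h : y ∈ ball z₀ R
    exacts [Or.inl h, Or.inr (hbdry ⟨hy, h⟩)]
  have hM : ∀ y ∈ D, u y ≤ sSup (u '' D) := fun y hy =>
    le_csSup (((isBounded_ball.subset inter_subset_left).isCompact_closure.bddAbove_image
      hcontD).mono (image_mono subset_closure)) (mem_image_of_mem u hy)
  have hM₀ : 0 ≤ sSup (u '' D) := (hpos x hx.2).le.trans (hM x hx)
  have hux := le_boundaryBarrier_of_lap_nonneg (by omega) isOpen_ball hν
    (ball_subset_closedBall.trans hΩν) hs hM₀ (hu.mono inter_subset_right)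
    (fun y hy => by rw [hlap y hy.2]; positivity) hcontD hM
    (fun y hy => (hvan y (hbdry hy)).le) x hx
  rw [Real.rpow_one, dist_eq_norm]
  exact hux.trans (boundaryBarrier_le hν hs hM₀ (mem_ball_iff_norm.mp hx.1).le)

/-- Hölder decay at the boundary for positive solutions of `−Δu + |∇u|^q = 0` (`1 < q < 2`)
in a ball tangent to the origin, vanishing on the boundary near `0`:
`u(x) ≤ c (‖x−P‖/s)^δ · sup_{B_s(P) ∩ Ω} u`. -/
theorem holder_boundary_decay
    (N : ℕ) (hN : 2 ≤ N) (q : ℝ) (hq1 : 1 < q) (hq2 : q < 2)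
    (z₀ : EuclideanSpace ℝ (Fin N)) (R : ℝ) (hR : 0 < R) (hz₀ : ‖z₀‖ = R) :
    ∃ r₀ ∈ Set.Ioo (0 : ℝ) R, ∃ δ : ℝ, 0 < δ ∧ ∃ c : ℝ, 0 < c ∧
      ∀ Q ∈ (Metric.sphere z₀ R \ {0}) ∩ Metric.ball 0 (2 * r₀ / 3),
      ∀ r : ℝ, 0 < r → r ≤ ‖Q‖ / 4 →
      ∀ u : EuclideanSpace ℝ (Fin N) → ℝ,
        (∀ x ∈ Metric.ball z₀ R, 0 < u x) →
        ContDiffOn ℝ 2 u (Metric.ball z₀ R) →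
        (∀ x ∈ Metric.ball z₀ R, lap u x = ‖gradient u x‖ ^ q) →
        ContinuousOn u
          (Metric.ball z₀ R ∪ ((Metric.sphere z₀ R \ {0}) ∩ Metric.ball 0 (2 * r₀))) →
        (∀ x ∈ (Metric.sphere z₀ R \ {0}) ∩ Metric.ball 0 (2 * r₀), u x = 0) →
        ∀ P ∈ Metric.sphere z₀ R ∩ Metric.ball Q r,
        ∀ s : ℝ, 0 < s → s < r →
        ∀ x ∈ Metric.ball P s ∩ Metric.ball z₀ R,
          u x ≤ c * (dist x P / s) ^ δ *
            sSup (u '' (Metric.ball P s ∩ Metric.ball z₀ R)) :=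
  holder_boundary_decay_general N hN q z₀ R hR
end
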